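/- arXiv:2104.13505 — 2 statements merged into one kernel-verified Lean document; each statement's English description precedes it below -/
import Mathlib

section
/- For every positive integer k there is a constant c depending only on k such that f(k,N) ≤ ⌊N/k⌋ + c for all N. -/
open Finset

/-- The elements of `S` on the `A` side (left side). -/
def sideA {N : ℕ} (S : Finset (Fin N ⊕ Fin N)) : Finset (Fin N ⊕ Fin N) :=
  S.filter (fun x => x.isLeft)

/-- The elements of `S` on the `B` side (right side). -/
def sideB {N : ℕ} (S : Finset (Fin N ⊕ Fin N)) : Finset (Fin N ⊕ Fin N) :=
  S.filter (fun x => x.isRight)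

/-- A family of subsets of `A ∪ B` is semiintersecting if every member meets each side in
exactly `k` elements, and any two distinct members are disjoint in exactly one of the sides. -/
def Semiintersecting (k N : ℕ) (F : Finset (Finset (Fin N ⊕ Fin N))) : Prop :=
  (∀ S ∈ F, (sideA S).card = k ∧ (sideB S).card = k) ∧
  (∀ S ∈ F, ∀ T ∈ F, S ≠ T →
      ((sideA S ∩ sideA T = ∅) ↔ (sideB S ∩ sideB T ≠ ∅)))

/-- `f k N`: the maximum cardinality of a semiintersecting family with parameters `k`, `N`. -/
noncomputable def semiMax (k N : ℕ) : ℕ :=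
  sSup {n | ∃ F : Finset (Finset (Fin N ⊕ Fin N)), Semiintersecting k N F ∧ F.card = n}

/-!
Two distinct members meet on exactly one side, so the core of a sunflower in the family lies
in `A` (a left sunflower) or in `B` (a right one). Every member meets the core of a sunflower
with `2k + 1` petals: a petal contains the core, which is nonempty, and any other member missing
the core would meet all `2k + 1` petals outside the core, in distinct points, with only `2k`
points of its own. Hence left and right such sunflowers cannot coexist, and after
swapping `A` and `B` we may assume there is no left one; by the Erdős–Rado sunflower lemma each
point of `A` then lies in boundedly many members.

Members whose `A`-part meets no other are pairwise `A`-disjoint, so there are at most `N / k`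
of them. The others are covered by the `A`-neighbourhoods of a maximal `A`-disjoint family `P`
of them, and `P` is bounded: a sunflower inside `P` is a right one, and each of its petals is
`A`-isolated, since every member meets its core, hence the petal, on the `B` side.
-/

open scoped Nat

section Sunflower

variable {ι α β : Type*} [DecidableEq α]

def IsSunflower (D : Finset (Finset α)) (Y : Finset α) : Prop :=
  (D : Set (Finset α)).Pairwise fun S T => S ∩ T = Y

lemma IsSunflower.image [DecidableEq β] {D : Finset (Finset α)} {Y : Finset α}
    (hD : IsSunflower D Y) (f : Finset α → Finset β) (hf : ∀ S T, f (S ∩ T) = f S ∩ f T) :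
    IsSunflower (D.image f) (f Y) := by
  simp only [IsSunflower, coe_image]
  rintro _ ⟨S, hS, rfl⟩ _ ⟨T, hT, rfl⟩ hST
  rw [← hf, hD hS hT (ne_of_apply_ne f hST)]

lemma IsSunflower.subset_of_mem {D : Finset (Finset α)} {Y S : Finset α}
    (hD : IsSunflower D Y) (h : 1 < #D) (hS : S ∈ D) : Y ⊆ S := by
  obtain ⟨T, hT, hTS⟩ := exists_mem_ne h S
  rw [← hD hS hT hTS.symm]
  exact inter_subset_left

/-- Outside the core the petals are disjoint, so a set avoiding the core meets at most
as many petals as it has elements. -/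
lemma IsSunflower.card_filter_not_disjoint_le {D : Finset (Finset α)} {Y : Finset α}
    (hD : IsSunflower D Y) {S : Finset α} (hSY : Disjoint S Y) :
    #{T ∈ D | ¬Disjoint S T} ≤ #S := by
  refine card_le_card_of_forall_subsingleton (fun T x => x ∈ T) (fun T hT => ?_) ?_
  · obtain ⟨x, hxS, hxT⟩ := not_disjoint_iff.mp (mem_filter.mp hT).2
    exact ⟨x, hxS, hxT⟩
  · intro x hxS T ⟨hT, hxT⟩ T' ⟨hT', hxT'⟩
    by_contra hTT'
    have hxY : x ∈ Y :=
      hD (mem_filter.mp hT).1 (mem_filter.mp hT').1 hTT' ▸ mem_inter.mpr ⟨hxT, hxT'⟩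
    exact disjoint_left.mp hSY hxS hxY

lemma exists_maximal_pairwiseDisjoint (s : Finset ι) (g : ι → Finset α) :
    ∃ P ⊆ s, (P : Set ι).PairwiseDisjoint g ∧
      ∀ i ∈ s, i ∉ P → ∃ j ∈ P, ¬Disjoint (g i) (g j) := by
  classical
  set cand := s.powerset.filter fun P : Finset ι => (P : Set ι).PairwiseDisjoint g
  obtain ⟨P, hP, hmax⟩ := exists_max_image cand card ⟨∅, by simp [cand]⟩
  obtain ⟨hPs, hPg⟩ := by simpa only [cand, mem_filter, mem_powerset] using hP
  refine ⟨P, hPs, hPg, fun i hi hiP => ?_⟩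
  by_contra! hdisj
  have hins : insert i P ∈ cand := by
    simp only [cand, mem_filter, mem_powerset, coe_insert]
    exact ⟨insert_subset hi hPs, hPg.insert fun j hj _ => hdisj j hj⟩
  have := hmax _ hins
  rw [card_insert_of_notMem hiP] at this
  omega

lemma exists_mem_lt_card_filter_mem {A : Finset (Finset α)} {U : Finset α} {n : ℕ}
    (hAU : ∀ S ∈ A, ¬Disjoint S U) (h : #U * n < #A) :
    ∃ x ∈ U, n < #{S ∈ A | x ∈ S} := by
  by_contra! hsmall
  have hcover : A ⊆ U.biUnion fun x => {S ∈ A | x ∈ S} := by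
    intro S hS
    obtain ⟨x, hxS, hxU⟩ := not_disjoint_iff.mp (hAU S hS)
    exact mem_biUnion.mpr ⟨x, hxU, mem_filter.mpr ⟨hS, hxS⟩⟩
  have := (card_le_card hcover).trans (card_biUnion_le_card_mul _ _ _ hsmall)
  omega

lemma IsSunflower.exists_insert_of_subset_image_erase {A D : Finset (Finset α)} {Y : Finset α}
    {x : α} (hA : ∀ S ∈ A, x ∈ S) (hD : D ⊆ A.image fun S => S.erase x)
    (hDY : IsSunflower D Y) :
    ∃ D' ⊆ A, #D' = #D ∧ IsSunflower D' (insert x Y) := by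
  have hxD : ∀ T ∈ D, x ∉ T := fun T hT => by
    obtain ⟨S, -, rfl⟩ := mem_image.mp (hD hT)
    exact notMem_erase x S
  refine ⟨D.image (insert x), ?_, ?_, hDY.image _ fun S T => insert_inter_distrib S T x⟩
  · intro _ hT
    obtain ⟨T, hTD, rfl⟩ := mem_image.mp hT
    obtain ⟨S, hS, rfl⟩ := mem_image.mp (hD hTD)
    rwa [insert_erase (hA S hS)]
  · refine card_image_of_injOn fun S hS T hT hST => ?_
    rw [← erase_insert (hxD S hS), ← erase_insert (hxD T hT)]
    exact congrArg (fun S : Finset α => S.erase x) hST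

/-- The Erdős–Rado sunflower lemma. -/
theorem exists_isSunflower_of_card_lt (w p : ℕ) (A : Finset (Finset α))
    (hA : ∀ S ∈ A, #S = w) (hcard : w ! * p ^ w < #A) :
    ∃ D ⊆ A, ∃ Y, #D = p + 1 ∧ IsSunflower D Y := by
  induction w generalizing A with
  | zero =>
    have hA1 := (card_le_card fun S hS => mem_singleton.mpr (card_eq_zero.mp (hA S hS))).trans_eq
      (card_singleton ∅)
    rw [Nat.factorial_zero, pow_zero, mul_one] at hcard
    omega
  | succ w ih =>
    obtain ⟨P, hPA, hPdisj, hPmax⟩ := exists_maximal_pairwiseDisjoint A id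
    by_cases hP : p + 1 ≤ #P
    · obtain ⟨D, hDP, hD⟩ := exists_subset_card_eq hP
      exact ⟨D, hDP.trans hPA, ∅, hD, fun S hS T hT hST =>
        disjoint_iff_inter_eq_empty.mp (hPdisj (hDP hS) (hDP hT) hST)⟩
    set U := P.biUnion id
    have hU : #U ≤ p * (w + 1) :=
      (card_biUnion_le_card_mul _ _ _ fun S hS => (hA S (hPA hS)).le).trans
        (Nat.mul_le_mul_right _ (by omega))
    have hAU : ∀ S ∈ A, ¬Disjoint S U := by
      intro S hS hSU
      by_cases hSP : S ∈ P
      · have hS0 : S.Nonempty := card_pos.mp (by rw [hA S hS]; omega)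
        exact hS0.ne_empty (disjoint_self.mp (hSU.mono_right (subset_biUnion_of_mem id hSP)))
      · obtain ⟨T, hTP, hST⟩ := hPmax S hS hSP
        exact hST (hSU.mono_right (subset_biUnion_of_mem id hTP))
    obtain ⟨x, -, hx⟩ := exists_mem_lt_card_filter_mem hAU (n := w ! * p ^ w) <| by
      calc #U * (w ! * p ^ w) ≤ p * (w + 1) * (w ! * p ^ w) := Nat.mul_le_mul_right _ hU
        _ = (w + 1)! * p ^ (w + 1) := by rw [Nat.factorial_succ, pow_succ]; ring
        _ < #A := hcard
    -- Remove the popular point `x`, find a sunflower among the links, and put `x` back.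
    set Ax := {S ∈ A | x ∈ S}
    have hxAx : ∀ S ∈ Ax, x ∈ S := fun S hS => (mem_filter.mp hS).2
    have hinj : Set.InjOn (fun S : Finset α => S.erase x) Ax :=
      (erase_injOn' x).mono hxAx
    obtain ⟨D, hD, Y, hDcard, hDY⟩ := ih (Ax.image fun S => S.erase x)
      (by
        simp only [mem_image, forall_exists_index, and_imp]
        rintro _ S hS rfl
        rw [card_erase_of_mem (hxAx S hS), hA S (mem_filter.mp hS).1, Nat.add_sub_cancel])
      (by rwa [card_image_of_injOn hinj])
    obtain ⟨D', hD'Ax, hD'card, hD'Y⟩ := hDY.exists_insert_of_subset_image_erase hxAx hD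
    exact ⟨D', hD'Ax.trans (filter_subset _ _), insert x Y, hD'card.trans hDcard, hD'Y⟩

end Sunflower

section Sides

variable {N : ℕ} {S T X Y : Finset (Fin N ⊕ Fin N)} {x : Fin N ⊕ Fin N}

lemma mem_sideA : x ∈ sideA S ↔ x ∈ S ∧ x.isLeft := mem_filter

lemma mem_sideB : x ∈ sideB S ↔ x ∈ S ∧ x.isRight := mem_filter

lemma sideA_subset : sideA S ⊆ S := filter_subset _ _

lemma sideB_subset : sideB S ⊆ S := filter_subset _ _

lemma sideA_inter : sideA (S ∩ T) = sideA S ∩ sideA T := filter_inter_distrib _ _ _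

lemma sideB_inter : sideB (S ∩ T) = sideB S ∩ sideB T := filter_inter_distrib _ _ _

lemma card_sideA_add_card_sideB : #(sideA S) + #(sideB S) = #S := by
  rw [sideA, sideB, ← card_filter_add_card_filter_not (s := S) (fun x => x.isLeft)]
  congr 2
  exact filter_congr fun x _ => Sum.not_isLeft.symm

lemma disjoint_of_sideA_eq_empty_of_sideB_eq_empty (hX : sideA X = ∅) (hY : sideB Y = ∅) :
    Disjoint X Y := by
  refine disjoint_left.mpr fun x hxX hxY => ?_
  cases x with
  | inl i => exact notMem_empty _ (hX ▸ mem_sideA.mpr ⟨hxX, rfl⟩)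
  | inr i => exact notMem_empty _ (hY ▸ mem_sideB.mpr ⟨hxY, rfl⟩)

lemma card_mul_le_of_pairwiseDisjoint_sideA {k : ℕ} {P : Finset (Finset (Fin N ⊕ Fin N))}
    (hP : ∀ S ∈ P, #(sideA S) = k)
    (hdisj : (P : Set (Finset (Fin N ⊕ Fin N))).PairwiseDisjoint sideA) : #P * k ≤ N := by
  have hleft : P.biUnion sideA ⊆ univ.map Function.Embedding.inl := by
    intro x hx
    obtain ⟨S, -, hxS⟩ := mem_biUnion.mp hx
    cases x with
    | inl i => simp
    | inr i => simp [mem_sideA] at hxS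
  calc #P * k = ∑ S ∈ P, #(sideA S) := by rw [sum_congr rfl hP, sum_const, smul_eq_mul]
    _ = #(P.biUnion sideA) := (card_biUnion hdisj).symm
    _ ≤ N := (card_le_card hleft).trans (by simp)

def swapSides (S : Finset (Fin N ⊕ Fin N)) : Finset (Fin N ⊕ Fin N) :=
  S.map (Equiv.sumComm (Fin N) (Fin N)).toEmbedding

lemma swapSides_swapSides (S : Finset (Fin N ⊕ Fin N)) : swapSides (swapSides S) = S := by
  simp [swapSides, map_map]

lemma swapSides_injective : Function.Injective (swapSides (N := N)) :=
  Function.LeftInverse.injective swapSides_swapSides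

lemma swapSides_inter (S T : Finset (Fin N ⊕ Fin N)) :
    swapSides (S ∩ T) = swapSides S ∩ swapSides T :=
  map_inter S T

lemma swapSides_eq_empty : swapSides S = ∅ ↔ S = ∅ := map_eq_empty

lemma card_swapSides : #(swapSides S) = #S := card_map _

lemma sideA_swapSides : sideA (swapSides S) = swapSides (sideB S) := by
  simp only [sideA, sideB, swapSides, filter_map]
  congr 1
  exact filter_congr fun x _ => by cases x <;> rfl

lemma sideB_swapSides : sideB (swapSides S) = swapSides (sideA S) := by
  simp only [sideA, sideB, swapSides, filter_map]
  congr 1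
  exact filter_congr fun x _ => by cases x <;> rfl

end Sides

def HasLeftSunflower (k N : ℕ) (F : Finset (Finset (Fin N ⊕ Fin N))) : Prop :=
  ∃ D ⊆ F, ∃ Y, #D = 2 * k + 1 ∧ IsSunflower D Y ∧ sideB Y = ∅

def HasRightSunflower (k N : ℕ) (F : Finset (Finset (Fin N ⊕ Fin N))) : Prop :=
  ∃ D ⊆ F, ∃ Y, #D = 2 * k + 1 ∧ IsSunflower D Y ∧ sideA Y = ∅

def SideAIsolated {N : ℕ} (F : Finset (Finset (Fin N ⊕ Fin N))) (S : Finset (Fin N ⊕ Fin N)) :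
    Prop :=
  ∀ T ∈ F, T ≠ S → Disjoint (sideA S) (sideA T)

instance {N : ℕ} (F : Finset (Finset (Fin N ⊕ Fin N))) : DecidablePred (SideAIsolated F) :=
  fun _ => by unfold SideAIsolated; infer_instance

/-- The sunflower lemma threshold for `2k`-sets and `2k + 1` petals. -/
def sunflowerThreshold (k : ℕ) : ℕ := (2 * k)! * (2 * k) ^ (2 * k)

lemma hasRightSunflower_of_hasLeftSunflower_image_swapSides {k N : ℕ}
    {F : Finset (Finset (Fin N ⊕ Fin N))} (h : HasLeftSunflower k N (F.image swapSides)) :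
    HasRightSunflower k N F := by
  obtain ⟨D, hD, Y, hcard, hDY, hY⟩ := h
  refine ⟨D.image swapSides, ?_, swapSides Y, ?_, hDY.image _ swapSides_inter, ?_⟩
  · intro _ hS
    obtain ⟨T, hT, rfl⟩ := mem_image.mp hS
    obtain ⟨S, hS, rfl⟩ := mem_image.mp (hD hT)
    rwa [swapSides_swapSides]
  · rw [card_image_of_injective _ swapSides_injective, hcard]
  · rw [sideA_swapSides, hY]
    rfl

namespace Semiintersecting

variable {k N : ℕ} {F D P : Finset (Finset (Fin N ⊕ Fin N))} {S T Y : Finset (Fin N ⊕ Fin N)}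
  (hF : Semiintersecting k N F)
include hF

lemma card_eq (hS : S ∈ F) : #S = 2 * k := by
  rw [← card_sideA_add_card_sideB, (hF.1 S hS).1, (hF.1 S hS).2, two_mul]

lemma disjoint_sideA_iff (hS : S ∈ F) (hT : T ∈ F) (hST : S ≠ T) :
    Disjoint (sideA S) (sideA T) ↔ ¬Disjoint (sideB S) (sideB T) := by
  simpa only [disjoint_iff_inter_eq_empty] using hF.2 S hS T hT hST

lemma not_disjoint (hS : S ∈ F) (hT : T ∈ F) (hST : S ≠ T) : ¬Disjoint S T := fun h =>
  (hF.disjoint_sideA_iff hS hT hST).mp (h.mono sideA_subset sideA_subset)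
    (h.mono sideB_subset sideB_subset)

lemma image_swapSides : Semiintersecting k N (F.image swapSides) := by
  refine ⟨fun _ hS => ?_, fun _ hS _ hT hST => ?_⟩
  · obtain ⟨S, hSF, rfl⟩ := mem_image.mp hS
    rw [sideA_swapSides, sideB_swapSides, card_swapSides, card_swapSides]
    exact (hF.1 S hSF).symm
  · obtain ⟨S, hSF, rfl⟩ := mem_image.mp hS
    obtain ⟨T, hTF, rfl⟩ := mem_image.mp hT
    have hiff := hF.2 S hSF T hTF fun h => hST (h ▸ rfl)
    rw [sideA_swapSides, sideA_swapSides, sideB_swapSides, sideB_swapSides, ← swapSides_inter,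
      ← swapSides_inter, swapSides_eq_empty, ne_eq, swapSides_eq_empty]
    tauto

lemma sideB_eq_empty_of_isSunflower (hDF : D ⊆ F) (hD : 1 < #D) (hDY : IsSunflower D Y)
    (hY : (sideA Y).Nonempty) : sideB Y = ∅ := by
  obtain ⟨S, hS, T, hT, hST⟩ := one_lt_card.mp hD
  have hA : ¬Disjoint (sideA S) (sideA T) := by
    rwa [disjoint_iff_inter_eq_empty, ← sideA_inter, hDY hS hT hST, ← ne_eq,
      ← nonempty_iff_ne_empty]
  rw [← hDY hS hT hST, sideB_inter, ← disjoint_iff_inter_eq_empty]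
  by_contra hB
  exact hA ((hF.disjoint_sideA_iff (hDF hS) (hDF hT) hST).mpr hB)

variable (hk : 0 < k)
include hk

lemma not_disjoint_core (hDF : D ⊆ F) (hD : #D = 2 * k + 1) (hDY : IsSunflower D Y)
    (hS : S ∈ F) : ¬Disjoint S Y := by
  intro hSY
  by_cases hSD : S ∈ D
  · obtain ⟨T, hT, hTS⟩ := exists_mem_ne (by omega : 1 < #D) S
    have hY : Y = ∅ := disjoint_self.mp (hSY.mono_left (hDY.subset_of_mem (by omega) hSD))
    exact hF.not_disjoint hS (hDF hT) hTS.symm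
      (disjoint_iff_inter_eq_empty.mpr ((hDY hSD hT hTS.symm).trans hY))
  · have hmeet : D ⊆ {T ∈ D | ¬Disjoint S T} := fun T hT =>
      mem_filter.mpr ⟨hT, hF.not_disjoint hS (hDF hT) fun h => hSD (h ▸ hT)⟩
    have := (card_le_card hmeet).trans (hDY.card_filter_not_disjoint_le hSY)
    rw [hF.card_eq hS] at this
    omega

lemma not_hasLeftSunflower_and_hasRightSunflower (hL : HasLeftSunflower k N F)
    (hR : HasRightSunflower k N F) : False := by
  obtain ⟨Da, hDa, X, hDaX, hsunX, hX⟩ := hL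
  obtain ⟨Db, hDb, Y, hDbY, hsunY, hY⟩ := hR
  obtain ⟨T, hT⟩ := card_pos.mp (by omega : 0 < #Db)
  have hmeet : Da ⊆ {S ∈ Da | ¬Disjoint Y S} := fun S hS =>
    mem_filter.mpr ⟨hS, fun h => hF.not_disjoint_core hk hDb hDbY hsunY (hDa hS) h.symm⟩
  have := (card_le_card hmeet).trans
    (hsunX.card_filter_not_disjoint_le (disjoint_of_sideA_eq_empty_of_sideB_eq_empty hY hX))
  have := (card_le_card (hsunY.subset_of_mem (by omega) hT)).trans_eq (hF.card_eq (hDb hT))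
  omega

lemma card_filter_mem_le (hL : ¬HasLeftSunflower k N F) {x : Fin N ⊕ Fin N} (hx : x.isLeft) :
    #{S ∈ F | x ∈ S} ≤ sunflowerThreshold k := by
  by_contra! h
  obtain ⟨D, hD, Y, hDcard, hDY⟩ := exists_isSunflower_of_card_lt (2 * k) (2 * k) _
    (fun S hS => hF.card_eq (mem_filter.mp hS).1) h
  obtain ⟨S, hS, T, hT, hST⟩ := one_lt_card.mp (by omega : 1 < #D)
  have hxY : x ∈ Y :=
    hDY hS hT hST ▸ mem_inter.mpr ⟨(mem_filter.mp (hD hS)).2, (mem_filter.mp (hD hT)).2⟩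
  have hDF : D ⊆ F := hD.trans (filter_subset _ _)
  exact hL ⟨D, hDF, Y, hDcard, hDY,
    hF.sideB_eq_empty_of_isSunflower hDF (by omega) hDY ⟨x, mem_sideA.mpr ⟨hxY, hx⟩⟩⟩

lemma sideAIsolated_of_mem_isSunflower (hDF : D ⊆ F) (hD : #D = 2 * k + 1)
    (hDY : IsSunflower D Y) (hY : sideA Y = ∅) (hS : S ∈ D) : SideAIsolated F S := by
  intro T hT hTS
  rw [hF.disjoint_sideA_iff (hDF hS) hT hTS.symm]
  obtain ⟨x, hxT, hxY⟩ := not_disjoint_iff.mp (hF.not_disjoint_core hk hDF hD hDY hT)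
  have hx : x.isRight := by
    rw [← Sum.not_isLeft]
    exact fun hx => notMem_empty x (hY ▸ mem_sideA.mpr ⟨hxY, hx⟩)
  have hxS : x ∈ S := hDY.subset_of_mem (by omega) hS hxY
  exact not_disjoint_iff.mpr ⟨x, mem_sideB.mpr ⟨hxS, hx⟩, mem_sideB.mpr ⟨hxT, hx⟩⟩

lemma card_le_of_pairwiseDisjoint_sideA (hPF : P ⊆ F)
    (hdisj : (P : Set (Finset (Fin N ⊕ Fin N))).PairwiseDisjoint sideA)
    (hP : ∀ S ∈ P, ¬SideAIsolated F S) : #P ≤ sunflowerThreshold k := by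
  by_contra! h
  obtain ⟨D, hDP, Y, hD, hDY⟩ := exists_isSunflower_of_card_lt (2 * k) (2 * k) P
    (fun S hS => hF.card_eq (hPF hS)) h
  obtain ⟨S, hS, T, hT, hST⟩ := one_lt_card.mp (by omega : 1 < #D)
  have hY : sideA Y = ∅ := by
    rw [← hDY hS hT hST, sideA_inter, ← disjoint_iff_inter_eq_empty]
    exact hdisj (hDP hS) (hDP hT) hST
  exact hP S (hDP hS) (hF.sideAIsolated_of_mem_isSunflower hk (hDP.trans hPF) hD hDY hY hS)

lemma card_filter_sideAIsolated_le : #{S ∈ F | SideAIsolated F S} ≤ N / k := by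
  rw [Nat.le_div_iff_mul_le hk]
  refine card_mul_le_of_pairwiseDisjoint_sideA (fun S hS => (hF.1 S (mem_filter.mp hS).1).1) ?_
  intro S hS T hT hST
  exact (mem_filter.mp hS).2 T (mem_filter.mp hT).1 hST.symm

lemma card_filter_not_sideAIsolated_le (hL : ¬HasLeftSunflower k N F) :
    #{S ∈ F | ¬SideAIsolated F S} ≤ sunflowerThreshold k * k * sunflowerThreshold k := by
  set W := {S ∈ F | ¬SideAIsolated F S}
  obtain ⟨P, hPW, hPdisj, hPmax⟩ := exists_maximal_pairwiseDisjoint W sideA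
  have hWF : W ⊆ F := filter_subset _ _
  have hP : #P ≤ sunflowerThreshold k :=
    hF.card_le_of_pairwiseDisjoint_sideA hk (hPW.trans hWF) hPdisj fun S hS =>
      (mem_filter.mp (hPW hS)).2
  have hcover : W ⊆ (P.biUnion sideA).biUnion fun x => {S ∈ F | x ∈ S} := by
    intro S hSW
    obtain ⟨T, hTP, hST⟩ : ∃ T ∈ P, ¬Disjoint (sideA S) (sideA T) := by
      by_cases hSP : S ∈ P
      · refine ⟨S, hSP, ?_⟩
        rw [disjoint_self, bot_eq_empty, ← ne_eq, ← nonempty_iff_ne_empty, ← card_pos,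
          (hF.1 S (hWF hSW)).1]
        exact hk
      · exact hPmax S hSW hSP
    obtain ⟨x, hxS, hxT⟩ := not_disjoint_iff.mp hST
    exact mem_biUnion.mpr ⟨x, mem_biUnion.mpr ⟨T, hTP, hxT⟩,
      mem_filter.mpr ⟨hWF hSW, sideA_subset hxS⟩⟩
  calc #W ≤ #(P.biUnion sideA) * sunflowerThreshold k :=
        (card_le_card hcover).trans <| card_biUnion_le_card_mul _ _ _ fun x hx => by
          obtain ⟨S, -, hxS⟩ := mem_biUnion.mp hx
          exact hF.card_filter_mem_le hk hL (mem_sideA.mp hxS).2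
    _ ≤ #P * k * sunflowerThreshold k := by
        gcongr
        exact card_biUnion_le_card_mul _ _ _ fun S hS => (hF.1 S (hWF (hPW hS))).1.le
    _ ≤ sunflowerThreshold k * k * sunflowerThreshold k := by gcongr

lemma card_le_of_not_hasLeftSunflower (hL : ¬HasLeftSunflower k N F) :
    #F ≤ N / k + sunflowerThreshold k * k * sunflowerThreshold k := by
  rw [← card_filter_add_card_filter_not (s := F) (SideAIsolated F)]
  exact add_le_add (hF.card_filter_sideAIsolated_le hk)
    (hF.card_filter_not_sideAIsolated_le hk hL)

theorem card_le : #F ≤ N / k + sunflowerThreshold k * k * sunflowerThreshold k := by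
  by_cases hL : HasLeftSunflower k N F
  · have hL' : ¬HasLeftSunflower k N (F.image swapSides) := fun h =>
      hF.not_hasLeftSunflower_and_hasRightSunflower hk hL
        (hasRightSunflower_of_hasLeftSunflower_image_swapSides h)
    rw [← card_image_of_injective F swapSides_injective]
    exact hF.image_swapSides.card_le_of_not_hasLeftSunflower hk hL'
  · exact hF.card_le_of_not_hasLeftSunflower hk hL

end Semiintersecting

theorem semiMax_le_div_add_const (k : ℕ) (hk : 0 < k) :
    ∃ c : ℕ, ∀ N : ℕ, semiMax k N ≤ N / k + c := by
  refine ⟨sunflowerThreshold k * k * sunflowerThreshold k, fun N => csSup_le ?_ ?_⟩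
  · exact ⟨0, ∅, ⟨by simp, by simp⟩, rfl⟩
  · rintro _ ⟨F, hF, rfl⟩
    exact hF.card_le hk
end

section
/- If p is a prime power and l ≤ p+1, then f(p, l·p²) ≥ l·p². -/
open Finset

/-!
Let `K` be a field with `p` elements. Take for `A` the disjoint union of `l` copies of the affine
plane `K²` and for `B` a single copy of it, and choose an injection `σ` from the `l` copies
into the `p + 1` slopes of `K²` (this is where `l ≤ p + 1` enters). The member indexed by
`(i, a, b)` has as `A`-side the line `y = a x + b` in copy `i`, and as `B`-side the line of slope
`σ i` and intercept `a`. Two `A`-sides meet iff they lie in the same copy and are not distinct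
parallels; two `B`-sides meet iff `σ i ≠ σ i'` or `a = a'`. For distinct indices exactly one of
these happens, giving `l p²` members.
-/

section Family

variable {N : ℕ}

lemma Semiintersecting.card_le_semiMax {k : ℕ} {F : Finset (Finset (Fin N ⊕ Fin N))}
    (hF : Semiintersecting k N F) : #F ≤ semiMax k N :=
  le_csSup ⟨_, fun _ ⟨G, _, hG⟩ => hG ▸ card_le_univ G⟩ ⟨F, hF, rfl⟩

lemma sideA_disjSum (s t : Finset (Fin N)) : sideA (s.disjSum t) = s.map .inl := by
  ext (x | x) <;> simp [sideA]

lemma sideB_disjSum (s t : Finset (Fin N)) : sideB (s.disjSum t) = t.map .inr := by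
  ext (x | x) <;> simp [sideB]

lemma card_le_semiMax_of_sides {ι α β : Type*} [Fintype ι] {k : ℕ} (hk : 0 < k)
    (eA : α ↪ Fin N) (eB : β ↪ Fin N) (SA : ι → Finset α) (SB : ι → Finset β)
    (hA : ∀ i, #(SA i) = k) (hB : ∀ i, #(SB i) = k)
    (hAB : ∀ i j, i ≠ j → (Disjoint (SA i) (SA j) ↔ ¬Disjoint (SB i) (SB j))) :
    Fintype.card ι ≤ semiMax k N := by
  classical
  set S : ι → Finset (Fin N ⊕ Fin N) := fun i => ((SA i).map eA).disjSum ((SB i).map eB)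
  have hS : Function.Injective S := by
    intro i j hij
    obtain ⟨hSA, hSB⟩ := disjSum_inj.1 hij
    by_contra hne
    have hAj : ¬Disjoint (SA j) (SA j) := by
      rw [disjoint_self_iff_empty, ← card_eq_zero, hA j]
      exact hk.ne'
    have hBj : ¬Disjoint (SB j) (SB j) := by
      rw [disjoint_self_iff_empty, ← card_eq_zero, hB j]
      exact hk.ne'
    have := hAB i j hne
    rw [(map_injective eA).eq_iff.1 hSA, (map_injective eB).eq_iff.1 hSB] at this
    exact hAj (this.2 hBj)
  have hF : Semiintersecting k N (univ.image S) := by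
    refine ⟨?_, ?_⟩
    · simp only [mem_image, mem_univ, true_and, forall_exists_index, forall_apply_eq_imp_iff]
      intro i
      simp [S, sideA_disjSum, sideB_disjSum, hA, hB]
    · simp only [mem_image, mem_univ, true_and, forall_exists_index, forall_apply_eq_imp_iff]
      intro i j hij
      simp only [S, sideA_disjSum, sideB_disjSum, ne_eq, ← disjoint_iff_inter_eq_empty,
        disjoint_map]
      exact hAB i j (hS.ne_iff.1 hij)
  simpa [card_image_of_injective _ hS] using hF.card_le_semiMax

end Family

section Lines

variable {K : Type*} [Field K]

lemma exists_mul_add_eq_mul_add_iff (a a' c c' : K) :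
    (∃ x, a * x + c = a' * x + c') ↔ a ≠ a' ∨ c = c' := by
  constructor
  · rintro ⟨x, hx⟩
    by_cases h : a = a'
    · exact Or.inr (by simpa [h] using hx)
    · exact Or.inl h
  · rintro (h | rfl)
    · refine ⟨(c' - c) / (a - a'), ?_⟩
      field_simp [sub_ne_zero.2 h]
      ring
    · exact ⟨0, by simp⟩

variable [Fintype K] [DecidableEq K]

/-- Slopes range over the projective line `Option K`: `line none c` is the vertical line `x = c`. -/
def line : Option K → K → Finset (K × K)
  | some a, c => univ.image fun x => (x, a * x + c)
  | none, c => univ.image fun y => (c, y)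

lemma card_line (s : Option K) (c : K) : #(line s c) = Fintype.card K := by
  cases s with
  | some a => rw [line, card_image_of_injective _ fun x y h => (Prod.ext_iff.1 h).1, card_univ]
  | none => rw [line, card_image_of_injective _ fun x y h => (Prod.ext_iff.1 h).2, card_univ]

lemma not_disjoint_line_iff (s s' : Option K) (c c' : K) :
    ¬Disjoint (line s c) (line s' c') ↔ s ≠ s' ∨ c = c' := by
  rw [not_disjoint_iff]
  cases s with
  | some a =>
    cases s' with
    | some a' =>
      simp [line, exists_mul_add_eq_mul_add_iff, eq_comm]
    | none => simp [line]
  | none =>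
    cases s' with
    | some a' => simp [line]
    | none => simp [line, eq_comm]

end Lines

theorem card_mul_sq_le_semiMax (K : Type*) [Field K] [Fintype K] [DecidableEq K] {l : ℕ}
    (hl0 : 0 < l) (hl : l ≤ Fintype.card K + 1) :
    l * Fintype.card K ^ 2 ≤ semiMax (Fintype.card K) (l * Fintype.card K ^ 2) := by
  set q := Fintype.card K
  have hcard : Fintype.card (Fin l × K × K) = l * q ^ 2 := by
    simp only [Fintype.card_prod, Fintype.card_fin]; ring
  obtain ⟨σ⟩ : Nonempty (Fin l ↪ Option K) :=
    Function.Embedding.nonempty_of_card_le (by simpa using hl)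
  obtain ⟨eB⟩ : Nonempty (K × K ↪ Fin (l * q ^ 2)) :=
    Function.Embedding.nonempty_of_card_le (by simpa [sq] using Nat.le_mul_of_pos_left _ hl0)
  calc l * q ^ 2 = Fintype.card (Fin l × K × K) := hcard.symm
    _ ≤ _ := card_le_semiMax_of_sides Fintype.card_pos
      (Fintype.equivFinOfCardEq hcard).toEmbedding eB
      (fun m => {m.1} ×ˢ line (some m.2.1) m.2.2) (fun m => line (σ m.1) m.2.1)
      (fun _ => by rw [card_product, card_singleton, one_mul, card_line])
      (fun _ => card_line _ _) ?_
  rintro ⟨i, a, b⟩ ⟨i', a', b'⟩ hne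
  rw [disjoint_product, disjoint_singleton, ← not_not (a := Disjoint (line _ _) _),
    not_disjoint_line_iff, not_disjoint_line_iff, σ.injective.ne_iff]
  simp only [ne_eq, Prod.mk.injEq, Option.some.injEq] at hne ⊢
  tauto

theorem semiMax_primePow_l (p l : ℕ) (hp : IsPrimePow p) (hl : l ≤ p + 1) :
    l * p ^ 2 ≤ semiMax p (l * p ^ 2) := by
  rcases Nat.eq_zero_or_pos l with rfl | hl0
  · simp
  obtain ⟨_⟩ : Nonempty (Field (Fin p)) := Fintype.nonempty_field_iff.2 (by simpa using hp)
  simpa using card_mul_sq_le_semiMax (Fin p) hl0 (by simpa using hl)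
end
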